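/- arXiv:2412.15384 — 4 statements merged into one kernel-verified Lean document; each statement's English description precedes it below -/
import Mathlib

section
/- Let q be a prime power, n a positive integer, and d_1 < d_2 < ... < d_k divisors of n. Let a_i ∈ F_{q^{d_i}}^* for 1 ≤ i ≤ k, and suppose that for all 1 ≤ i < j ≤ k one has a_i^((q^{d_i}−1)/(q^{g_{ij}}−1)) = a_j^((q^{d_j}−1)/(q^{g_{ij}}−1)), where g_{ij} = gcd(d_i, d_j). Then there exists α ∈ F_{q^n}^* such that α^((q^n−1)/(q^{d_i}−1)) = a_i for every 1 ≤ i ≤ k. -/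
-- gcd (q^a - 1) (q^b - 1) ∣ q^(gcd a b) - 1
lemma my_gcd_pow_sub (q a b : ℕ) (hq : 2 ≤ q) (ha : 0 < a) :
    Nat.gcd (q ^ a - 1) (q ^ b - 1) ∣ q ^ Nat.gcd a b - 1 := by
  set G := Nat.gcd (q ^ a - 1) (q ^ b - 1) with hG
  have hqa : 1 ≤ q ^ a := Nat.one_le_pow _ _ (by omega)
  have hGpos : 0 < G := Nat.gcd_pos_of_pos_left _ (by
    have : 2 ≤ q ^ a := le_trans hq (Nat.le_self_pow ha.ne' q)
    omega)
  haveI : NeZero G := ⟨hGpos.ne'⟩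
  have key : ∀ c : ℕ, G ∣ q ^ c - 1 → (q : ZMod G) ^ c = 1 := by
    intro c hc
    have h1 : 1 ≤ q ^ c := Nat.one_le_pow _ _ (by omega)
    have := (ZMod.natCast_eq_zero_iff _ _).mpr hc
    rw [Nat.cast_sub h1] at this
    push_cast at this
    linear_combination this
  have h1 : (q : ZMod G) ^ a = 1 := key a (Nat.gcd_dvd_left _ _)
  have h2 : (q : ZMod G) ^ b = 1 := key b (Nat.gcd_dvd_right _ _)
  have hord : orderOf (q : ZMod G) ∣ Nat.gcd a b :=
    Nat.dvd_gcd (orderOf_dvd_of_pow_eq_one h1) (orderOf_dvd_of_pow_eq_one h2)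
  have h3 : (q : ZMod G) ^ Nat.gcd a b = 1 := orderOf_dvd_iff_pow_eq_one.mp hord
  have hg1 : 1 ≤ q ^ Nat.gcd a b := Nat.one_le_pow _ _ (by omega)
  rw [← ZMod.natCast_eq_zero_iff, Nat.cast_sub hg1]
  push_cast
  linear_combination h3

lemma my_pow_sub_dvd (q e m : ℕ) (h : e ∣ m) : q ^ e - 1 ∣ q ^ m - 1 := by
  obtain ⟨c, rfl⟩ := h
  have := Nat.sub_dvd_pow_sub_pow (q ^ e) 1 c
  simpa [pow_mul] using this

lemma my_gcd_lcm_distrib (a b c : ℕ) (ha : a ≠ 0) (hb : b ≠ 0) (hc : c ≠ 0) :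
    Nat.gcd (Nat.lcm a b) c = Nat.lcm (Nat.gcd a c) (Nat.gcd b c) := by
  have hab : Nat.lcm a b ≠ 0 := Nat.lcm_ne_zero ha hb
  have hac : Nat.gcd a c ≠ 0 := Nat.gcd_ne_zero_left ha
  have hbc : Nat.gcd b c ≠ 0 := Nat.gcd_ne_zero_left hb
  refine Nat.dvd_antisymm ?_ ?_
  · rw [← Nat.factorization_le_iff_dvd (Nat.gcd_ne_zero_right hc) (Nat.lcm_ne_zero hac hbc)]
    rw [Nat.factorization_gcd hab hc, Nat.factorization_lcm ha hb,
      Nat.factorization_lcm hac hbc, Nat.factorization_gcd ha hc, Nat.factorization_gcd hb hc]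
    intro p
    simp only [Finsupp.inf_apply, Finsupp.sup_apply]
    exact le_of_eq (min_max_distrib_right _ _ _)
  · exact Nat.lcm_dvd (Nat.dvd_gcd ((Nat.gcd_dvd_left a c).trans (Nat.dvd_lcm_left a b)) (Nat.gcd_dvd_right a c))
      (Nat.dvd_gcd ((Nat.gcd_dvd_left b c).trans (Nat.dvd_lcm_right a b)) (Nat.gcd_dvd_right b c))

lemma my_gcd_finset_lcm {ι : Type*} (s : Finset ι) (f : ι → ℕ) (c : ℕ)
    (hf : ∀ i ∈ s, f i ≠ 0) (hc : c ≠ 0) :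
    Nat.gcd (s.lcm f) c = s.lcm (fun i => Nat.gcd (f i) c) := by
  classical
  induction s using Finset.induction_on with
  | empty => simp [Nat.gcd_one_left]
  | @insert a s hnotmem ih =>
    have hlcm : s.lcm f ≠ 0 := by
      simp only [Ne, Finset.lcm_eq_zero_iff, Set.mem_image]
      rintro ⟨x, hx, hx0⟩
      exact hf x (Finset.mem_insert_of_mem hx) hx0
    rw [Finset.lcm_insert, Finset.lcm_insert]
    show Nat.gcd (Nat.lcm (f a) (s.lcm f)) c
        = Nat.lcm (Nat.gcd (f a) c) (s.lcm fun i => Nat.gcd (f i) c)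
    rw [my_gcd_lcm_distrib _ _ _ (hf a (Finset.mem_insert_self a s)) hlcm hc,
      ih (fun i hi => hf i (Finset.mem_insert_of_mem hi))]

lemma my_lcm_dvd_int {ι : Type*} (s : Finset ι) (f : ι → ℕ) (y : ℤ)
    (h : ∀ i ∈ s, (f i : ℤ) ∣ y) : ((s.lcm f : ℕ) : ℤ) ∣ y := by
  classical
  induction s using Finset.induction_on with
  | empty => simp
  | @insert a s hnotmem ih =>
    rw [Finset.lcm_insert]
    have h1 : (f a : ℤ) ∣ y := h a (Finset.mem_insert_self a s)
    have h2 : ((s.lcm f : ℕ) : ℤ) ∣ y := ih (fun i hi => h i (Finset.mem_insert_of_mem hi))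
    show ((Nat.lcm (f a) (s.lcm f) : ℕ) : ℤ) ∣ y
    exact Int.natCast_dvd.mpr (Nat.lcm_dvd (Int.natCast_dvd.mp h1) (Int.natCast_dvd.mp h2))

lemma my_crt2 (m n : ℕ) (a b : ℤ) (h : (Nat.gcd m n : ℤ) ∣ a - b) :
    ∃ x : ℤ, (m : ℤ) ∣ x - a ∧ (n : ℤ) ∣ x - b := by
  obtain ⟨t, ht⟩ := h
  refine ⟨a - m * Nat.gcdA m n * t, ⟨-(Nat.gcdA m n * t), by ring⟩, ⟨Nat.gcdB m n * t, ?_⟩⟩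
  have hbez : (Nat.gcd m n : ℤ) = m * Nat.gcdA m n + n * Nat.gcdB m n := Nat.gcd_eq_gcd_ab m n
  have : a - b = (m * Nat.gcdA m n + n * Nat.gcdB m n) * t := by rw [← hbez]; exact ht
  linarith [this]

lemma my_crt_family : ∀ (k : ℕ) (m : Fin k → ℕ) (b : Fin k → ℤ), (∀ i, m i ≠ 0) →
    (∀ i j, (Nat.gcd (m i) (m j) : ℤ) ∣ b i - b j) → ∃ x : ℤ, ∀ i, (m i : ℤ) ∣ x - b i := by
  intro k
  induction k with
  | zero => exact fun _ _ _ _ => ⟨0, fun i => i.elim0⟩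
  | succ k ih =>
    intro m b hm h
    obtain ⟨x, hx⟩ := ih (fun i => m i.castSucc) (fun i => b i.castSucc)
      (fun i => hm _) (fun i j => h _ _)
    set L := (Finset.univ : Finset (Fin k)).lcm (fun i => m i.castSucc) with hL
    have hcomp : (Nat.gcd L (m (Fin.last k)) : ℤ) ∣ x - b (Fin.last k) := by
      rw [hL, my_gcd_finset_lcm _ _ _ (fun i _ => hm _) (hm _)]
      apply my_lcm_dvd_int
      intro i _
      have h1 : (Nat.gcd (m i.castSucc) (m (Fin.last k)) : ℤ) ∣ x - b i.castSucc :=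
        dvd_trans (Int.natCast_dvd_natCast.mpr (Nat.gcd_dvd_left _ _)) (hx i)
      have h2 := h i.castSucc (Fin.last k)
      have : x - b (Fin.last k) = (x - b i.castSucc) + (b i.castSucc - b (Fin.last k)) := by ring
      rw [this]
      exact dvd_add h1 h2
    obtain ⟨y, hy1, hy2⟩ := my_crt2 L (m (Fin.last k)) x (b (Fin.last k)) hcomp
    refine ⟨y, fun i => ?_⟩
    induction i using Fin.lastCases with
    | last => exact hy2
    | cast i =>
      have hiL : (m i.castSucc : ℤ) ∣ (L : ℤ) :=
        Int.natCast_dvd_natCast.mpr (Finset.dvd_lcm (Finset.mem_univ i))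
      have : y - b i.castSucc = (y - x) + (x - b i.castSucc) := by ring
      rw [this]
      exact dvd_add (hiL.trans hy1) (hx i)

theorem stmt4 (q n k : ℕ) (hq : IsPrimePow q) (hn : 0 < n) (hk : 0 < k)
    (E : Type*) [Field E] [Fintype E] (hE : Fintype.card E = q ^ n)
    (d : Fin k → ℕ) (hmono : StrictMono d) (hdvd : ∀ i, d i ∣ n)
    (a : Fin k → E)
    -- `a i` lies in `F_{q^{d i}}^*`, the multiplicative group of the subfield
    -- with `q ^ d i` elements:
    (hmem : ∀ i, a i ^ (q ^ d i - 1) = 1)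
    -- the gluing (admissibility) condition:
    (hadm : ∀ i j : Fin k, i < j →
      a i ^ ((q ^ d i - 1) / (q ^ Nat.gcd (d i) (d j) - 1)) =
        a j ^ ((q ^ d j - 1) / (q ^ Nat.gcd (d i) (d j) - 1))) :
    ∃ α : E, α ≠ 0 ∧ ∀ i, α ^ ((q ^ n - 1) / (q ^ d i - 1)) = a i := by
  have hq2 : 2 ≤ q := hq.two_le
  have hq_le : ∀ m : ℕ, 0 < m → 2 ≤ q ^ m := fun m hm =>
    le_trans hq2 (Nat.le_self_pow hm.ne' q)
  have hdpos : ∀ i, 0 < d i := by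
    intro i
    rcases Nat.eq_zero_or_pos (d i) with h0 | h; swap; · exact h
    exfalso; have := hdvd i; rw [h0] at this
    exact hn.ne' (Nat.eq_zero_of_zero_dvd this)
  classical
  set N := q ^ n - 1 with hN
  have hNpos : 0 < N := by have := hq_le n hn; omega
  have hcardU : Fintype.card Eˣ = N := by rw [Fintype.card_units, hE]
  obtain ⟨g, hg⟩ := IsCyclic.exists_generator (α := Eˣ)
  have horder : orderOf g = N := by
    rw [orderOf_eq_card_of_forall_mem_zpowers hg, Nat.card_eq_fintype_card, hcardU]
  set P : Fin k → ℕ := fun i => q ^ d i - 1 with hPdef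
  have hPpos : ∀ i, 0 < P i := fun i => by
    have := hq_le (d i) (hdpos i); simp only [hPdef]; omega
  have hPN : ∀ i, P i ∣ N := fun i => my_pow_sub_dvd q (d i) n (hdvd i)
  set m : Fin k → ℕ := fun i => N / P i with hmdef
  have hmP : ∀ i, m i * P i = N := fun i => Nat.div_mul_cancel (hPN i)
  have ha0 : ∀ i, a i ≠ 0 := by
    intro i h0
    have h1 := hmem i
    rw [h0, zero_pow (hPpos i).ne'] at h1
    exact zero_ne_one h1
  set u : Fin k → Eˣ := fun i => Units.mk0 (a i) (ha0 i) with hudef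
  have hval : ∀ i, ((u i : Eˣ) : E) = a i := fun i => rfl
  have hc : ∀ i, ∃ c : ℕ, g ^ c = u i := fun i => by
    obtain ⟨c, hc⟩ := mem_powers_iff_mem_zpowers.mpr (hg (u i)); exact ⟨c, hc⟩
  choose c hcspec using hc
  have hdvd_c : ∀ i, m i ∣ c i := by
    intro i
    have h1 : (u i) ^ (P i) = 1 := by
      ext
      push_cast
      exact hmem i
    have h2 : g ^ (c i * P i) = 1 := by rw [pow_mul, hcspec i, h1]
    have hN2 : N ∣ c i * P i := horder ▸ orderOf_dvd_of_pow_eq_one h2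
    rw [← hmP i] at hN2
    exact (Nat.mul_dvd_mul_iff_right (hPpos i)).mp hN2
  set b : Fin k → ℕ := fun i => c i / m i with hbdef
  have hcb : ∀ i, m i * b i = c i := fun i => Nat.mul_div_cancel' (hdvd_c i)
  -- compatibility from hadm
  have hcompat : ∀ i j : Fin k, i < j →
      ((q ^ Nat.gcd (d i) (d j) - 1 : ℕ) : ℤ) ∣ (b j : ℤ) - b i := by
    intro i j hij
    set G := q ^ Nat.gcd (d i) (d j) - 1 with hGdef
    have hGpos : 0 < G := by
      have := hq_le _ (Nat.gcd_pos_of_pos_left (d j) (hdpos i)); omega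
    have hGi : G ∣ P i := my_pow_sub_dvd q _ _ (Nat.gcd_dvd_left _ _)
    have hGj : G ∣ P j := my_pow_sub_dvd q _ _ (Nat.gcd_dvd_right _ _)
    set e := P i / G with hedef
    set f := P j / G with hfdef
    have heG : e * G = P i := Nat.div_mul_cancel hGi
    have hfG : f * G = P j := Nat.div_mul_cancel hGj
    have hMi : m i * e * G = N := by rw [mul_assoc, heG, hmP]
    have hMj : m j * f * G = N := by rw [mul_assoc, hfG, hmP]
    have hM : m i * e = m j * f := by
      have := hMi.trans hMj.symm
      exact Nat.eq_of_mul_eq_mul_right hGpos this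
    have hMpos : 0 < m i * e := by
      rcases Nat.eq_zero_or_pos (m i * e) with h0 | h; swap; · exact h
      rw [h0, zero_mul] at hMi; omega
    -- unit version of hadm
    have hu : (u i) ^ e = (u j) ^ f := by
      ext
      push_cast
      exact hadm i j hij
    have hgg : g ^ (c i * e) = g ^ (c j * f) := by
      rw [pow_mul, pow_mul, hcspec i, hcspec j, hu]
    have hmod : c i * e ≡ c j * f [MOD N] := by
      rw [← horder]; exact pow_eq_pow_iff_modEq.mp hgg
    have hdint : (N : ℤ) ∣ (c j : ℤ) * f - (c i : ℤ) * e := by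
      have := hmod.dvd
      exact_mod_cast this
    have hform : (c j : ℤ) * f - (c i : ℤ) * e = (m i * e : ℕ) * ((b j : ℤ) - b i) := by
      have hMZ : (m i : ℤ) * e = (m j : ℤ) * f := by exact_mod_cast hM
      rw [← hcb i, ← hcb j]
      push_cast
      linear_combination (-(b j : ℤ)) * hMZ
    rw [hform, ← hMi] at hdint
    have : ((m i * e : ℕ) : ℤ) * G ∣ ((m i * e : ℕ) : ℤ) * ((b j : ℤ) - b i) := by
      push_cast at hdint ⊢
      convert hdint using 2
    exact (mul_dvd_mul_iff_left (by exact_mod_cast hMpos.ne' : ((m i * e : ℕ) : ℤ) ≠ 0)).mp this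
  have hcompat' : ∀ i j : Fin k, ((Nat.gcd (P i) (P j)) : ℤ) ∣ (b i : ℤ) - (b j : ℤ) := by
    intro i j
    rcases lt_trichotomy i j with hij | rfl | hji
    · have h1 : Nat.gcd (P i) (P j) ∣ q ^ Nat.gcd (d i) (d j) - 1 :=
        my_gcd_pow_sub q (d i) (d j) hq2 (hdpos i)
      have := (Int.natCast_dvd_natCast.mpr h1).trans (hcompat i j hij)
      simpa using this.neg_right
    · simp
    · have h1 : Nat.gcd (P j) (P i) ∣ q ^ Nat.gcd (d j) (d i) - 1 :=
        my_gcd_pow_sub q (d j) (d i) hq2 (hdpos j)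
      have h2 := (Int.natCast_dvd_natCast.mpr h1).trans (hcompat j i hji)
      rw [Nat.gcd_comm (P i) (P j)]
      exact h2
  obtain ⟨x, hx⟩ := my_crt_family k P (fun i => (b i : ℤ)) (fun i => (hPpos i).ne') hcompat'
  set y : ℕ := (x % (N : ℤ)).toNat with hydef
  have hymod : ∀ i, (P i : ℤ) ∣ (y : ℤ) - b i := by
    intro i
    have h1 : (y : ℤ) = x % (N : ℤ) :=
      Int.toNat_of_nonneg (Int.emod_nonneg x (by exact_mod_cast hNpos.ne'))
    have h2 : (N : ℤ) ∣ (y : ℤ) - x := ⟨-(x / (N : ℤ)), by rw [h1, Int.emod_def]; ring⟩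
    have h3 : (P i : ℤ) ∣ (y : ℤ) - x :=
      dvd_trans (Int.natCast_dvd_natCast.mpr (hPN i)) h2
    have h4 : (y : ℤ) - b i = ((y : ℤ) - x) + (x - b i) := by ring
    rw [h4]
    exact dvd_add h3 (hx i)
  refine ⟨((g ^ y : Eˣ) : E), Units.ne_zero _, fun i => ?_⟩
  have hgoal : (g ^ y) ^ (m i) = u i := by
    rw [← hcspec i, ← pow_mul, pow_eq_pow_iff_modEq, horder]
    rw [Nat.modEq_iff_dvd]
    have : (c i : ℤ) - (y * m i : ℕ) = (m i : ℤ) * ((b i : ℤ) - y) := by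
      rw [← hcb i]; push_cast; ring
    rw [this, ← hmP i]
    push_cast
    have h5 := (hymod i).neg_right
    rw [neg_sub] at h5
    exact mul_dvd_mul_left _ h5
  have : ((g ^ y : Eˣ) : E) ^ (m i) = a i := by
    rw [← Units.val_pow_eq_pow_val, hgoal, hval]
  exact this
end

section
/- Let q be a prime power, n a positive integer, and d_1 < d_2 < ... < d_k divisors of n. Let a_i ∈ F_{q^{d_i}}^* for 1 ≤ i ≤ k, and suppose that for all 1 ≤ i < j ≤ k one has a_i^((q^{d_i}−1)/(q^{g_{ij}}−1)) = a_j^((q^{d_j}−1)/(q^{g_{ij}}−1)), where g_{ij} = gcd(d_i, d_j). Then the number of elements α ∈ F_{q^n}^* with α^((q^n−1)/(q^{d_i}−1)) = a_i for every 1 ≤ i ≤ k equals gcd((q^n−1)/(q^{d_1}−1), ..., (q^n−1)/(q^{d_k}−1)). -/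
theorem gcdLcmDistrib (a b c : ℕ) : Nat.gcd (Nat.lcm a b) c = Nat.lcm (Nat.gcd a c) (Nat.gcd b c) := by
  rcases Nat.eq_zero_or_pos a with rfl | ha
  · simp only [Nat.lcm_zero_left, Nat.gcd_zero_left]
    exact (Nat.dvd_antisymm (Nat.lcm_dvd dvd_rfl (Nat.gcd_dvd_right b c)) (Nat.dvd_lcm_left _ _)).symm
  rcases Nat.eq_zero_or_pos b with rfl | hb
  · simp only [Nat.lcm_zero_right, Nat.gcd_zero_left]
    exact (Nat.dvd_antisymm (Nat.lcm_dvd (Nat.gcd_dvd_right a c) dvd_rfl) (Nat.dvd_lcm_right _ _)).symm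
  rcases Nat.eq_zero_or_pos c with rfl | hc
  · simp
  apply Nat.eq_of_factorization_eq
  · exact Nat.gcd_ne_zero_right hc.ne'
  · exact Nat.lcm_ne_zero (Nat.gcd_ne_zero_right hc.ne') (Nat.gcd_ne_zero_right hc.ne')
  intro p
  rw [Nat.factorization_gcd (Nat.lcm_ne_zero ha.ne' hb.ne') hc.ne',
    Nat.factorization_lcm ha.ne' hb.ne',
    Nat.factorization_lcm (Nat.gcd_ne_zero_right hc.ne') (Nat.gcd_ne_zero_right hc.ne'),
    Nat.factorization_gcd ha.ne' hc.ne', Nat.factorization_gcd hb.ne' hc.ne']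
  simp only [Finsupp.inf_apply, Finsupp.sup_apply]
  exact min_max_distrib_right ..
theorem gcdEqOfDvdSub {A B B' : ℕ} (h : (A:ℤ) ∣ (B:ℤ) - (B':ℤ)) :
    Nat.gcd A B = Nat.gcd A B' := by
  apply Nat.dvd_antisymm
  · refine Nat.dvd_gcd (Nat.gcd_dvd_left _ _) ?_
    have h1 : ((Nat.gcd A B : ℕ) : ℤ) ∣ (A:ℤ) := Int.natCast_dvd_natCast.mpr (Nat.gcd_dvd_left _ _)
    have h2 : ((Nat.gcd A B : ℕ) : ℤ) ∣ (B:ℤ) := Int.natCast_dvd_natCast.mpr (Nat.gcd_dvd_right _ _)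
    have h3 : ((Nat.gcd A B : ℕ) : ℤ) ∣ (B':ℤ) := by
      have := dvd_sub h2 (h1.trans h); simpa using this
    exact_mod_cast h3
  · refine Nat.dvd_gcd (Nat.gcd_dvd_left _ _) ?_
    have h1 : ((Nat.gcd A B' : ℕ) : ℤ) ∣ (A:ℤ) := Int.natCast_dvd_natCast.mpr (Nat.gcd_dvd_left _ _)
    have h2 : ((Nat.gcd A B' : ℕ) : ℤ) ∣ (B':ℤ) := Int.natCast_dvd_natCast.mpr (Nat.gcd_dvd_right _ _)
    have h3 : ((Nat.gcd A B' : ℕ) : ℤ) ∣ (B:ℤ) := by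
      have := dvd_add h2 (h1.trans h); simpa using this
    exact_mod_cast h3

theorem gcdPowSubOne (q : ℕ) (hq : 1 ≤ q) (m n : ℕ) :
    Nat.gcd (q ^ m - 1) (q ^ n - 1) = q ^ Nat.gcd m n - 1 := by
  induction m, n using Nat.gcd.induction with
  | H0 n => simp
  | H1 m n hm ih =>
    conv_rhs => rw [Nat.gcd_rec m n]
    rw [← ih, Nat.gcd_comm (q ^ (n % m) - 1)]
    have hcast : ∀ k : ℕ, ((q ^ k - 1 : ℕ) : ℤ) = (q:ℤ) ^ k - 1 := fun k => by
      rw [Nat.cast_sub (Nat.one_le_pow _ _ hq), Nat.cast_pow, Nat.cast_one]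
    apply gcdEqOfDvdSub
    rw [hcast, hcast, hcast]
    have : ((q:ℤ) ^ n - 1) - ((q:ℤ) ^ (n % m) - 1) = (q:ℤ) ^ (n % m) * (((q:ℤ) ^ m) ^ (n / m) - 1) := by
      rw [mul_sub, mul_one, ← pow_mul, ← pow_add, Nat.mod_add_div n m]; ring
    rw [this]
    exact Dvd.dvd.mul_left (by simpa using sub_dvd_pow_sub_pow ((q:ℤ)^m) 1 (n/m)) _


theorem gcdFinsetLcmDistrib {ι : Type*} [DecidableEq ι] (s : Finset ι) (f : ι → ℕ) (c : ℕ) :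
    Nat.gcd (s.lcm f) c = s.lcm (fun i => Nat.gcd (f i) c) := by
  induction s using Finset.induction with
  | empty => simp [Nat.gcd_one_left]
  | insert _ _ h ih =>
    rw [Finset.lcm_insert, Finset.lcm_insert]
    rw [show ∀ x y : ℕ, lcm x y = Nat.lcm x y from fun _ _ => rfl]
    rw [gcdLcmDistrib, ih]
    rfl

theorem natLcmCastDvd {a b : ℕ} {z : ℤ} (ha : (a:ℤ) ∣ z) (hb : (b:ℤ) ∣ z) : ((Nat.lcm a b : ℕ) : ℤ) ∣ z := by
  exact Int.natCast_dvd.mpr (Nat.lcm_dvd (Int.natCast_dvd.mp ha) (Int.natCast_dvd.mp hb))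

theorem finsetLcmCastDvd {ι : Type*} [DecidableEq ι] (s : Finset ι) (f : ι → ℕ) {z : ℤ}
    (h : ∀ i ∈ s, (f i : ℤ) ∣ z) : ((s.lcm f : ℕ) : ℤ) ∣ z := by
  induction s using Finset.induction with
  | empty => simp
  | @insert a s ha ih =>
    rw [Finset.lcm_insert]
    exact natLcmCastDvd (h a (Finset.mem_insert_self a s))
      (ih fun i hi => h i (Finset.mem_insert_of_mem hi))

theorem pairCrt {R r : ℕ} {y b : ℤ} (h : ((Nat.gcd R r : ℕ) : ℤ) ∣ y - b) :
    ∃ x : ℤ, (R:ℤ) ∣ x - y ∧ (r:ℤ) ∣ x - b := by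
  obtain ⟨w, hw⟩ := h
  have hbez : ((Nat.gcd R r : ℕ) : ℤ) = R * Int.gcdA R r + r * Int.gcdB R r := by
    have := Int.gcd_eq_gcd_ab (R:ℤ) (r:ℤ)
    rwa [Int.gcd_natCast_natCast] at this
  refine ⟨y - (R * Int.gcdA R r) * w, ⟨-(Int.gcdA R r * w), by ring⟩, ⟨Int.gcdB R r * w, ?_⟩⟩
  have : y - b = (R * Int.gcdA R r + r * Int.gcdB R r) * w := by rw [← hbez]; exact hw
  linarith [this]

theorem finCrt : ∀ (k : ℕ) (r : Fin k → ℕ) (b : Fin k → ℤ),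
    (∀ i j, ((Nat.gcd (r i) (r j) : ℕ) : ℤ) ∣ b i - b j) →
    ∃ x : ℤ, ∀ i, (r i : ℤ) ∣ x - b i := by
  intro k
  induction k with
  | zero => exact fun r b _ => ⟨0, fun i => i.elim0⟩
  | succ k ih =>
    intro r b h
    obtain ⟨y, hy⟩ := ih (fun i => r i.castSucc) (fun i => b i.castSucc) (fun i j => h _ _)
    set R : ℕ := Finset.univ.lcm (fun i : Fin k => r i.castSucc) with hR
    have hgcd : ((Nat.gcd R (r (Fin.last k)) : ℕ) : ℤ) ∣ y - b (Fin.last k) := by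
      rw [gcdFinsetLcmDistrib]
      apply finsetLcmCastDvd
      intro i _
      have h1 : ((r i.castSucc : ℕ) : ℤ) ∣ y - b i.castSucc := hy i
      have h2 := h i.castSucc (Fin.last k)
      have d1 : ((Nat.gcd (r i.castSucc) (r (Fin.last k)) : ℕ) : ℤ) ∣ y - b i.castSucc :=
        dvd_trans (Int.natCast_dvd_natCast.mpr (Nat.gcd_dvd_left _ _)) h1
      have := dvd_add d1 h2
      simpa using this
    obtain ⟨x, hx1, hx2⟩ := pairCrt hgcd
    refine ⟨x, fun i => ?_⟩
    induction i using Fin.lastCases with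
    | last => exact hx2
    | cast i =>
      have hdR : (r i.castSucc : ℤ) ∣ (R : ℤ) :=
        Int.natCast_dvd_natCast.mpr (Finset.dvd_lcm (Finset.mem_univ i))
      have := dvd_add (hdR.trans hx1) (hy i)
      simpa using this



theorem stmt5 (q n k : ℕ) (hq : IsPrimePow q) (hn : 0 < n) (hk : 0 < k)
    (E : Type*) [Field E] [Fintype E] (hE : Fintype.card E = q ^ n)
    (d : Fin k → ℕ) (hmono : StrictMono d) (hdvd : ∀ i, d i ∣ n)
    (a : Fin k → E)
    -- `a i` lies in `F_{q^{d i}}^*`, the multiplicative group of the subfield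
    -- with `q ^ d i` elements:
    (hmem : ∀ i, a i ^ (q ^ d i - 1) = 1)
    -- the gluing (admissibility) condition:
    (hadm : ∀ i j : Fin k, i < j →
      a i ^ ((q ^ d i - 1) / (q ^ Nat.gcd (d i) (d j) - 1)) =
        a j ^ ((q ^ d j - 1) / (q ^ Nat.gcd (d i) (d j) - 1))) :
    {α : E | α ≠ 0 ∧ ∀ i, α ^ ((q ^ n - 1) / (q ^ d i - 1)) = a i}.ncard =
      Finset.univ.gcd (fun i => (q ^ n - 1) / (q ^ d i - 1)) := by
  classical
  have hq2 : 2 ≤ q := hq.two_le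
  set N := q ^ n - 1 with hN
  set r : Fin k → ℕ := fun i => q ^ d i - 1 with hr
  set m : Fin k → ℕ := fun i => N / r i with hm
  have hd0 : ∀ i, 0 < d i := fun i =>
    Nat.pos_of_ne_zero (fun h => hn.ne' (Nat.eq_zero_of_zero_dvd (h ▸ hdvd i)))
  have hsub : ∀ s t : ℕ, s ∣ t → q ^ s - 1 ∣ q ^ t - 1 := by
    intro s t ⟨e, he⟩
    have := Nat.sub_dvd_pow_sub_pow (q ^ s) 1 e
    rwa [one_pow, ← pow_mul, ← he] at this
  have hrdvd : ∀ i, r i ∣ N := fun i => hsub _ _ (hdvd i)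
  have hpowpos : ∀ s : ℕ, 0 < s → 0 < q ^ s - 1 := fun s hs =>
    Nat.sub_pos_of_lt (Nat.one_lt_pow hs.ne' hq2)
  have hrpos : ∀ i, 0 < r i := fun i => hpowpos _ (hd0 i)
  have hNpos : 0 < N := hpowpos n hn
  have hrm : ∀ i, r i * m i = N := fun i => Nat.mul_div_cancel' (hrdvd i)
  have hmpos : ∀ i, 0 < m i := fun i => Nat.div_pos (Nat.le_of_dvd hNpos (hrdvd i)) (hrpos i)
  have hmdvd : ∀ i, m i ∣ N := fun i => ⟨r i, by rw [mul_comm]; exact (hrm i).symm⟩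
  have hcardU : Nat.card Eˣ = N := by rw [Nat.card_units, Nat.card_eq_fintype_card, hE]
  obtain ⟨g, hg⟩ := IsCyclic.exists_generator (α := Eˣ)
  have hordg : orderOf g = N := by
    rw [orderOf_eq_card_of_forall_mem_zpowers hg, hcardU]
  have ha0 : ∀ i, a i ≠ 0 := by
    intro i h
    have := hmem i
    rw [h, zero_pow (hrpos i).ne'] at this
    exact zero_ne_one this
  set u : Fin k → Eˣ := fun i => Units.mk0 (a i) (ha0 i) with hu
  have hcc : ∀ i, ∃ c : ℤ, g ^ c = u i := fun i => Subgroup.mem_zpowers_iff.mp (hg (u i))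
  choose cc hccs using hcc
  have hupow : ∀ i, u i ^ r i = 1 := fun i => Units.ext (by push_cast; exact hmem i)
  have hdvd_cm : ∀ i, (N : ℤ) ∣ cc i * r i := by
    intro i
    rw [← hordg, orderOf_dvd_iff_zpow_eq_one, zpow_mul, hccs i, zpow_natCast, hupow i]
  have hmc : ∀ i, ∃ bi : ℤ, cc i = m i * bi := by
    intro i
    obtain ⟨t, ht⟩ := hdvd_cm i
    refine ⟨t, ?_⟩
    have hNrm : (N : ℤ) = (r i : ℤ) * (m i : ℤ) := by exact_mod_cast (hrm i).symm
    have hri : (r i : ℤ) ≠ 0 := by exact_mod_cast (hrpos i).ne'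
    apply mul_left_cancel₀ hri
    linear_combination ht + t * hNrm
  choose b hb using hmc
  have key : ∀ i j : Fin k, i < j → ((q ^ Nat.gcd (d i) (d j) - 1 : ℕ) : ℤ) ∣ b i - b j := by
    intro i j hij
    set t := q ^ Nat.gcd (d i) (d j) - 1 with ht
    have htpos : 0 < t := hpowpos _ (Nat.gcd_pos_of_pos_left _ (hd0 i))
    have htri : t ∣ r i := hsub _ _ (Nat.gcd_dvd_left _ _)
    have htrj : t ∣ r j := hsub _ _ (Nat.gcd_dvd_right _ _)
    have htN : t ∣ N := htri.trans (hrdvd i)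
    have huadm : u i ^ (r i / t) = u j ^ (r j / t) :=
      Units.ext (by push_cast; exact hadm i j hij)
    have h1 : g ^ (cc i * ((r i / t : ℕ) : ℤ)) = g ^ (cc j * ((r j / t : ℕ) : ℤ)) := by
      rw [zpow_mul, zpow_mul, hccs, hccs, zpow_natCast, zpow_natCast, huadm]
    have h2 : (N : ℤ) ∣ cc j * ((r j / t : ℕ) : ℤ) - cc i * ((r i / t : ℕ) : ℤ) := by
      have := zpow_eq_zpow_iff_modEq.mp h1
      rw [hordg] at this
      exact this.dvd
    have harith : ∀ i' : Fin k, t ∣ r i' →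
        cc i' * ((r i' / t : ℕ) : ℤ) = b i' * ((N / t : ℕ) : ℤ) := by
      intro i' hti
      rw [hb i']
      have hmr : m i' * (r i' / t) = N / t := by
        rw [← Nat.mul_div_assoc _ hti, mul_comm (m i'), hrm i']
      rw [← hmr]
      push_cast
      ring
    rw [harith i htri, harith j htrj] at h2
    have h3 : (N : ℤ) ∣ (b j - b i) * ((N / t : ℕ) : ℤ) := by
      rw [sub_mul]; exact h2
    have hNt : N = t * (N / t) := (Nat.mul_div_cancel' htN).symm
    have hNtpos : 0 < N / t := Nat.div_pos (Nat.le_of_dvd hNpos htN) htpos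
    obtain ⟨w, hw⟩ := h3
    have hc : b j - b i = (t : ℤ) * w := by
      have hne : ((N / t : ℕ) : ℤ) ≠ 0 := by exact_mod_cast hNtpos.ne'
      apply mul_right_cancel₀ hne
      rw [hw]
      have hNt' : (N : ℤ) = (t : ℤ) * ((N / t : ℕ) : ℤ) := by exact_mod_cast hNt
      rw [hNt']
      ring
    exact ⟨-w, by rw [← neg_sub, hc]; ring⟩
  have hcrt : ∀ i j, ((Nat.gcd (r i) (r j) : ℕ) : ℤ) ∣ b i - b j := by
    intro i j
    have hgr : Nat.gcd (r i) (r j) = q ^ Nat.gcd (d i) (d j) - 1 :=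
      gcdPowSubOne q (by omega) (d i) (d j)
    rcases lt_trichotomy i j with hij | rfl | hji
    · rw [hgr]; exact key i j hij
    · simp
    · rw [hgr, Nat.gcd_comm (d i) (d j)]
      exact dvd_sub_comm.mp (key j i hji)
  obtain ⟨x, hx⟩ := finCrt k r b hcrt
  set α₀ : Eˣ := g ^ x with hα₀
  have hα₀pow : ∀ i, (α₀ : E) ^ m i = a i := by
    intro i
    have h1 : α₀ ^ m i = u i := by
      rw [hα₀, ← zpow_natCast (g ^ x), ← zpow_mul]
      have hxm : x * (m i : ℤ) = cc i + (x - b i) * (m i : ℤ) := by rw [hb i]; ring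
      rw [hxm, zpow_add, hccs i]
      have hone : g ^ ((x - b i) * (m i : ℤ)) = 1 := by
        rw [← orderOf_dvd_iff_zpow_eq_one, hordg]
        have hNrm : (N : ℤ) = (r i : ℤ) * (m i : ℤ) := by exact_mod_cast (hrm i).symm
        rw [hNrm]
        exact mul_dvd_mul (hx i) dvd_rfl
      rw [hone, mul_one]
    calc (α₀ : E) ^ m i = ((α₀ ^ m i : Eˣ) : E) := by push_cast; rfl
      _ = a i := by rw [h1]; rfl
  set G := Finset.univ.gcd m with hG
  have hGdvdm : ∀ i, G ∣ m i := fun i => Finset.gcd_dvd (Finset.mem_univ i)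
  have i0 : Fin k := ⟨0, hk⟩
  have hGN : G ∣ N := (hGdvdm i0).trans (hmdvd i0)
  have hGpos : 0 < G := by
    rcases Nat.eq_zero_or_pos G with h | h
    · exact absurd (zero_dvd_iff.mp (h ▸ hGdvdm i0)) (hmpos i0).ne'
    · exact h
  show {α : E | α ≠ 0 ∧ ∀ i, α ^ m i = a i}.ncard = G
  have hset : {α : E | α ≠ 0 ∧ ∀ i, α ^ m i = a i}
      = (fun β => (α₀ : E) * β) '' {β : E | β ^ G = 1} := by
    ext α
    simp only [Set.mem_setOf_eq, Set.mem_image]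
    constructor
    · rintro ⟨hα0, hαi⟩
      refine ⟨(α₀ : E)⁻¹ * α, ?_, by field_simp⟩
      have hβ : ∀ i, ((α₀ : E)⁻¹ * α) ^ m i = 1 := by
        intro i
        rw [mul_pow, inv_pow, hα₀pow i, hαi i, inv_mul_cancel₀ (ha0 i)]
      have hord : orderOf ((α₀ : E)⁻¹ * α) ∣ G :=
        Finset.dvd_gcd fun i _ => orderOf_dvd_of_pow_eq_one (hβ i)
      exact orderOf_dvd_iff_pow_eq_one.mp hord
    · rintro ⟨β, hβ, rfl⟩
      have hβ0 : β ≠ 0 := fun h => by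
        rw [h, zero_pow hGpos.ne'] at hβ; exact zero_ne_one hβ
      refine ⟨mul_ne_zero (Units.ne_zero α₀) hβ0, fun i => ?_⟩
      obtain ⟨e, he⟩ := hGdvdm i
      rw [mul_pow, hα₀pow i, he, pow_mul, hβ, one_pow, mul_one]
  rw [hset, Set.ncard_image_of_injective _ (mul_right_injective₀ (Units.ne_zero α₀))]
  have hroots : {β : E | β ^ G = 1} = ↑(Polynomial.nthRootsFinset G (1 : E)) := by
    ext β
    simp [Polynomial.mem_nthRootsFinset hGpos]
  rw [hroots, Set.ncard_coe_finset]
  have hNG : N / G ∣ N := Nat.div_dvd_of_dvd hGN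
  have hordζ : orderOf (g ^ (N / G)) = G := by
    rw [orderOf_pow, hordg, Nat.gcd_eq_right hNG, Nat.div_div_self hGN hNpos.ne']
  have hprim : IsPrimitiveRoot ((g ^ (N / G) : Eˣ) : E) G := by
    have h := IsPrimitiveRoot.orderOf ((g ^ (N / G) : Eˣ) : E)
    rwa [orderOf_units, hordζ] at h
  exact hprim.card_nthRootsFinset
end

section
/- Let q be a prime power, k ≥ 2, and let d_1 < d_2 < ... < d_k be pairwise coprime divisors of a positive integer n with d_i < n for every i. Then gcd((q^n−1)/(q^{d_1}−1), ..., (q^n−1)/(q^{d_k}−1)) ≥ q^(n−(d_1+d_2+...+d_k)). -/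
private lemma prod_sub_one_le (q : ℕ) (hq : 2 ≤ q) {k : ℕ} (d : Fin k → ℕ)
    (s : Finset (Fin k)) (hs : s.Nonempty) :
    ∏ i ∈ s, (q ^ d i - 1) ≤ q ^ (∑ i ∈ s, d i) - 1 := by
  induction hs using Finset.Nonempty.cons_induction with
  | singleton a => simp
  | cons a s ha hs ih =>
    rw [Finset.prod_cons, Finset.sum_cons, pow_add]
    have h1 : 1 ≤ q ^ d a := Nat.one_le_pow _ _ (by omega)
    have h2 : 1 ≤ q ^ (∑ i ∈ s, d i) := Nat.one_le_pow _ _ (by omega)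
    calc (q ^ d a - 1) * ∏ i ∈ s, (q ^ d i - 1)
        ≤ (q ^ d a - 1) * (q ^ (∑ i ∈ s, d i) - 1) := Nat.mul_le_mul_left _ ih
      _ ≤ q ^ d a * q ^ (∑ i ∈ s, d i) - 1 := by
          obtain ⟨x, hx⟩ := Nat.exists_eq_add_of_le h1
          obtain ⟨y, hy⟩ := Nat.exists_eq_add_of_le h2
          rw [hx, hy]
          simp only [Nat.add_sub_cancel_left]
          have : (1 + x) * (1 + y) = 1 + x + y + x * y := by ring
          omega

theorem stmt14 (q n k : ℕ) (hq : 2 ≤ q) (hn : 0 < n) (hk : 2 ≤ k)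
    (d : Fin k → ℕ) (hmono : StrictMono d)
    (hcop : ∀ i j : Fin k, i ≠ j → Nat.Coprime (d i) (d j))
    (hdvd : ∀ i, d i ∣ n) (hlt : ∀ i, d i < n) :
    ((Finset.univ.gcd (fun i => (q ^ n - 1) / (q ^ d i - 1)) : ℕ) : ℝ) ≥
      (q : ℝ) ^ ((n : ℤ) - ∑ i, (d i : ℤ)) := by
  have hk0 : 0 < k := by omega
  have i0 : Fin k := ⟨0, hk0⟩
  have hd_pos : ∀ i, 0 < d i := fun i => Nat.pos_of_ne_zero (fun h => by
    have := hdvd i; rw [h] at this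
    have := Nat.eq_zero_of_zero_dvd this; omega)
  set N := q ^ n - 1 with hN
  have hNpos : 0 < N := by
    have : 2 ≤ q ^ n := le_trans hq (Nat.le_self_pow (by omega) q)
    omega
  have hapos : ∀ i, 0 < q ^ d i - 1 := by
    intro i
    have : 2 ≤ q ^ d i := le_trans hq (Nat.le_self_pow (by have := hd_pos i; omega) q)
    omega
  have hadvd : ∀ i, q ^ d i - 1 ∣ N := by
    intro i
    have h := Nat.sub_dvd_pow_sub_pow (q ^ d i) 1 (n / d i)
    rwa [one_pow, ← pow_mul, Nat.mul_div_cancel' (hdvd i)] at h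
  set L := Finset.univ.lcm (fun i : Fin k => q ^ d i - 1) with hL
  have hLdvd : L ∣ N := Finset.lcm_dvd (fun i _ => hadvd i)
  have hLpos : 0 < L := by
    rcases Nat.eq_zero_or_pos L with h | h
    · exfalso
      have h0 := (Finset.lcm_eq_zero_iff (f := fun i : Fin k => q ^ d i - 1)
        (s := Finset.univ)).mp h
      obtain ⟨i, _, hi⟩ := h0
      have := hapos i; omega
    · exact h
  have hdvd_each : ∀ i : Fin k, N / L ∣ N / (q ^ d i - 1) := by
    intro i
    obtain ⟨c, hc⟩ := (Finset.dvd_lcm (Finset.mem_univ i) : q ^ d i - 1 ∣ L)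
    obtain ⟨m, hm⟩ := hLdvd
    rw [← hL] at hc
    have h1 : N / L = m := by rw [hm, Nat.mul_div_cancel_left _ hLpos]
    have hN2 : N = (q ^ d i - 1) * (c * m) := by rw [hm, hc]; ring
    have h2 : N / (q ^ d i - 1) = c * m := by
      rw [hN2, Nat.mul_div_cancel_left _ (hapos i)]
    exact ⟨c, by rw [h1, h2]; ring⟩
  set G := Finset.univ.gcd (fun i : Fin k => N / (q ^ d i - 1)) with hG
  have hNLG : N / L ∣ G := Finset.dvd_gcd (fun i _ => hdvd_each i)
  have hGpos : 0 < G := by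
    rcases Nat.eq_zero_or_pos G with h | h
    · exfalso
      have h0 : G ∣ N / (q ^ d i0 - 1) := Finset.gcd_dvd (Finset.mem_univ i0)
      rw [h] at h0
      have : N / (q ^ d i0 - 1) = 0 := Nat.eq_zero_of_zero_dvd h0
      have hpos : 0 < N / (q ^ d i0 - 1) :=
        Nat.div_pos (Nat.le_of_dvd hNpos (hadvd i0)) (hapos i0)
      omega
    · exact h
  set s := ∑ i, d i with hs
  have hcast : ((∑ i, (d i : ℤ))) = (s : ℤ) := by push_cast [hs]; rfl
  rw [hcast]
  rcases le_or_gt n s with hns | hns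
  · -- RHS ≤ 1 ≤ G
    have h1 : (q : ℝ) ^ ((n : ℤ) - (s : ℤ)) ≤ 1 := by
      apply zpow_le_one_of_nonpos₀
      · exact_mod_cast (by omega : 1 ≤ q)
      · omega
    have h2 : (1 : ℝ) ≤ (G : ℝ) := by exact_mod_cast hGpos
    linarith
  · -- main case
    have key : q ^ (n - s) ≤ G := by
      have hNL_le : N / L ≤ G := Nat.le_of_dvd hGpos hNLG
      refine le_trans ?_ hNL_le
      rw [Nat.le_div_iff_mul_le hLpos]
      have hLle : L ≤ q ^ s - 1 := by
        have hLP : L ∣ ∏ i, (q ^ d i - 1) :=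
          Finset.lcm_dvd (fun i _ => Finset.dvd_prod_of_mem _ (Finset.mem_univ i))
        have hPpos : 0 < ∏ i, (q ^ d i - 1) :=
          Finset.prod_pos (fun i _ => hapos i)
        exact le_trans (Nat.le_of_dvd hPpos hLP)
          (prod_sub_one_le q hq d Finset.univ ⟨i0, Finset.mem_univ i0⟩)
      have h1 : 1 ≤ q ^ (n - s) := Nat.one_le_pow _ _ (by omega)
      have h2 : q ^ (n - s) * q ^ s = q ^ n := by rw [← pow_add]; congr 1; omega
      have h3 : 1 ≤ q ^ s := Nat.one_le_pow _ _ (by omega)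
      calc q ^ (n - s) * L ≤ q ^ (n - s) * (q ^ s - 1) := Nat.mul_le_mul_left _ hLle
        _ ≤ N := by rw [hN]; rw [Nat.mul_sub_one] <;> omega
    have hzpow : (q : ℝ) ^ ((n : ℤ) - (s : ℤ)) = ((q ^ (n - s) : ℕ) : ℝ) := by
      have : ((n : ℤ) - (s : ℤ)) = ((n - s : ℕ) : ℤ) := by omega
      rw [this, zpow_natCast]; push_cast; ring
    rw [hzpow]
    exact_mod_cast key
end

section
/- Let q ≥ 2 be an integer and let d_1, ..., d_k (k ≥ 1) be pairwise coprime positive integers. Then lcm(q^{d_1}−1, ..., q^{d_k}−1) = (q^{d_1}−1)·(q^{d_2}−1)···(q^{d_k}−1)/(q−1)^{k−1}. -/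
private lemma gcd_pow_sub_one (q : ℕ) (hq : 1 ≤ q) :
    ∀ m n : ℕ, Nat.gcd (q ^ m - 1) (q ^ n - 1) = q ^ Nat.gcd m n - 1 := by
  intro m
  induction m using Nat.strong_induction_on with
  | _ m ih =>
    intro n
    rcases Nat.eq_zero_or_pos m with hm | hm
    · subst hm; simp
    · have key : q ^ n - 1 = (q ^ (n % m) - 1) + q ^ (n % m) * ((q ^ m) ^ (n / m) - 1) := by
        have h1 : q ^ (n % m) * (q ^ m) ^ (n / m) = q ^ n := by
          rw [← pow_mul, ← pow_add, Nat.mod_add_div]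
        have h2 : 1 ≤ q ^ (n % m) := Nat.one_le_pow _ _ hq
        have h3 : 1 ≤ (q ^ m) ^ (n / m) := Nat.one_le_pow _ _ (Nat.one_le_pow _ _ hq)
        have h4 : q ^ (n % m) * ((q ^ m) ^ (n / m) - 1) =
            q ^ (n % m) * (q ^ m) ^ (n / m) - q ^ (n % m) := by
          rw [Nat.mul_sub, Nat.mul_one]
        rw [h4, h1]
        have h5 : q ^ (n % m) ≤ q ^ n := Nat.pow_le_pow_right hq (Nat.mod_le n m)
        omega
      have hdvd : q ^ m - 1 ∣ (q ^ m) ^ (n / m) - 1 := by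
        simpa using Nat.sub_dvd_pow_sub_pow (q ^ m) 1 (n / m)
      obtain ⟨c, hc⟩ := hdvd
      rw [Nat.gcd_comm, key, hc, mul_comm (q ^ m - 1) c, ← mul_assoc,
        Nat.gcd_add_mul_right_left, ih (n % m) (Nat.mod_lt n hm) m, ← Nat.gcd_rec]

private lemma lcm_key (q : ℕ) (hq : 2 ≤ q) {k : ℕ} (d : Fin k → ℕ) (hd : ∀ i, 0 < d i)
    (hcop : ∀ i j : Fin k, i ≠ j → Nat.Coprime (d i) (d j)) :
    ∀ S : Finset (Fin k), S.Nonempty →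
      S.lcm (fun i => q ^ d i - 1) * (q - 1) ^ (S.card - 1) =
        ∏ i ∈ S, (q ^ d i - 1) := by
  have hq1 : 1 ≤ q := by omega
  intro S hS
  induction S using Finset.induction_on with
  | empty => exact absurd hS (by simp)
  | @insert a S ha ih =>
    rcases Finset.eq_empty_or_nonempty S with hSe | hSne
    · subst hSe; simp
    · have hcard : (insert a S).card = S.card + 1 := Finset.card_insert_of_notMem ha
      set f : Fin k → ℕ := fun i => q ^ d i - 1 with hf
      have hgcd : Nat.gcd (f a) (S.lcm f) = q - 1 := by
        apply Nat.dvd_antisymm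
        · -- gcd divides q - 1
          set M : ℕ := ∏ i ∈ S, d i with hM
          have hLdvd : S.lcm f ∣ q ^ M - 1 := by
            apply Finset.lcm_dvd
            intro i hi
            have : q ^ d i - 1 ∣ q ^ M - 1 := by
              obtain ⟨c, hc⟩ := Finset.dvd_prod_of_mem d hi
              rw [hM, hc, pow_mul]
              simpa using Nat.sub_dvd_pow_sub_pow (q ^ d i) 1 c
            exact this
          have hcm : Nat.Coprime (d a) M := by
            rw [hM, Nat.coprime_prod_right_iff]
            intro i hi
            exact hcop a i (by rintro rfl; exact ha hi)
          calc Nat.gcd (f a) (S.lcm f) ∣ Nat.gcd (q ^ d a - 1) (q ^ M - 1) :=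
                Nat.dvd_gcd (Nat.gcd_dvd_left _ _) ((Nat.gcd_dvd_right _ _).trans hLdvd)
            _ = q - 1 := by rw [gcd_pow_sub_one q hq1, hcm, pow_one]
        · -- q - 1 divides gcd
          apply Nat.dvd_gcd
          · simpa using Nat.sub_dvd_pow_sub_pow q 1 (d a)
          · obtain ⟨i, hi⟩ := hSne
            exact dvd_trans (by simpa using Nat.sub_dvd_pow_sub_pow q 1 (d i))
              (Finset.dvd_lcm hi)
      have hmul : Nat.lcm (f a) (S.lcm f) * (q - 1) = f a * S.lcm f := by
        rw [← hgcd, mul_comm, Nat.gcd_mul_lcm]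
      have hScard : S.card - 1 + 1 = S.card := Nat.succ_pred_eq_of_pos (Finset.card_pos.mpr hSne)
      rw [Finset.lcm_insert, Finset.prod_insert ha, hcard, Nat.add_sub_cancel,
        ← hScard, pow_succ, lcm_eq_nat_lcm]
      calc Nat.lcm (f a) (S.lcm f) * ((q-1)^(S.card-1) * (q-1))
          = (Nat.lcm (f a) (S.lcm f) * (q-1)) * (q-1)^(S.card-1) := by ring
        _ = f a * S.lcm f * (q-1)^(S.card-1) := by rw [hmul]
        _ = f a * (S.lcm f * (q-1)^(S.card-1)) := by ring
        _ = f a * S.prod f := by rw [ih hSne]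

theorem stmt15 (q k : ℕ) (hq : 2 ≤ q) (hk : 1 ≤ k)
    (d : Fin k → ℕ) (hd : ∀ i, 0 < d i)
    (hcop : ∀ i j : Fin k, i ≠ j → Nat.Coprime (d i) (d j)) :
    Finset.univ.lcm (fun i => q ^ d i - 1) =
      (∏ i, (q ^ d i - 1)) / (q - 1) ^ (k - 1) := by
  have : Nonempty (Fin k) := ⟨⟨0, hk⟩⟩
  have h := lcm_key q hq d hd hcop Finset.univ Finset.univ_nonempty
  rw [Finset.card_univ, Fintype.card_fin] at h
  have hpos : 0 < (q - 1) ^ (k - 1) := Nat.pow_pos (by omega)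
  exact (Nat.div_eq_of_eq_mul_left hpos h.symm).symm
end
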